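/- arXiv:1406.7612 — 10 statements merged into one kernel-verified Lean document; each statement's English description precedes it below -/
import Mathlib

section
/- Let n, N ∈ ℕ and λ* ∈ ℝⁿ. For j = 0,…,N let v_j : ℝⁿ → ℝ be polynomial functions with v_j(λ*) = 0, and let b_j : ℝ × ℝⁿ → ℝ be analytic in a neighborhood of (0, λ*) with b_j(0, λ*) ≠ 0. Let λ : ℝ → ℝⁿ be analytic at 0 with λ(0) = λ*, and for (h, ε) near (0,0) set d(h, ε) = Σ_{j=0}^{N} v_j(λ(ε)) h^{2j+1} b_j(h, λ(ε)). For each j let v̄_{j,r} denote the r-th Taylor coefficient at ε = 0 of the analytic map ε ↦ v_j(λ(ε)), and set B_j(h) = b_j(h, λ*). Fix an integer k ≥ 1 and suppose that for every h in a neighborhood of 0 the Taylor coefficients at ε = 0 of ε ↦ d(h, ε) of all orders r with 0 ≤ r ≤ k−1 vanish; let M_k(h) be its Taylor coefficient of order k. Then v̄_{j,r} = 0 for all j = 0,…,N and all 1 ≤ r ≤ k−1, and M_k(h) = Σ_{j=0}^{N} v̄_{j,k} h^{2j+1} B_j(h) for all h in a neighborhood of 0. -/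
/-!
For fixed `h`, each summand of `d(h, ε)` is `v_j(λ(ε))` times a factor analytic in `ε`. By Leibniz'
rule, once every `ε ↦ v_j(λ(ε))` vanishes to order `r` at `ε = 0`, the `r`-th `ε`-derivative of
`d(h, ·)` at `0` is `Σ_j (v_j ∘ λ)⁽ʳ⁾(0) h^(2j+1) B_j(h)`. The functions `h^(2j+1) B_j(h)` have
pairwise distinct orders at `h = 0` since `B_j(0) ≠ 0`, hence are linearly independent near `0`.
So the vanishing of the `r`-th derivative for `r < k` forces, by induction on `r` starting at
`r = 0`, all `(v_j ∘ λ)⁽ʳ⁾(0)` with `r < k` to vanish, and the case `r = k` gives `M_k`.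
-/

open Filter Finset Topology

section IteratedDeriv

variable {𝕜 : Type*} [NontriviallyNormedField 𝕜] {𝔸 : Type*} [NormedRing 𝔸] [NormedAlgebra 𝕜 𝔸]
  {r : ℕ} {x : 𝕜}

theorem iteratedDeriv_fun_mul_of_iteratedDeriv_eq_zero {f g : 𝕜 → 𝔸}
    (hf : ContDiffAt 𝕜 r f x) (hg : ContDiffAt 𝕜 r g x)
    (hflat : ∀ s < r, iteratedDeriv s f x = 0) :
    iteratedDeriv r (fun y => f y * g y) x = iteratedDeriv r f x * g x := by
  rw [iteratedDeriv_fun_mul hf hg, sum_range_succ,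
    sum_eq_zero fun i hi => by rw [hflat i (mem_range.mp hi)]; simp]
  simp

theorem iteratedDeriv_fun_sum_mul_const_mul_of_iteratedDeriv_eq_zero {ι : Type*}
    {s : Finset ι} {f g : ι → 𝕜 → 𝔸} (a : ι → 𝔸) (hf : ∀ i ∈ s, ContDiffAt 𝕜 r (f i) x)
    (hg : ∀ i ∈ s, ContDiffAt 𝕜 r (g i) x)
    (hflat : ∀ i ∈ s, ∀ m < r, iteratedDeriv m (f i) x = 0) :
    iteratedDeriv r (fun y => ∑ i ∈ s, f i y * a i * g i y) x
      = ∑ i ∈ s, iteratedDeriv r (f i) x * a i * g i x := by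
  simp only [mul_assoc]
  rw [iteratedDeriv_fun_sum fun i hi => (hf i hi).mul (contDiffAt_const.mul (hg i hi))]
  exact sum_congr rfl fun i hi => iteratedDeriv_fun_mul_of_iteratedDeriv_eq_zero (hf i hi)
    (contDiffAt_const.mul (hg i hi)) (hflat i hi)

end IteratedDeriv

theorem AnalyticAt.eventually_analyticAt_comp_prodMk {𝕜 : Type*} [NontriviallyNormedField 𝕜]
    {E F G : Type*} [NormedAddCommGroup E] [NormedSpace 𝕜 E] [NormedAddCommGroup F]
    [NormedSpace 𝕜 F] [NormedAddCommGroup G] [NormedSpace 𝕜 G] [CompleteSpace G]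
    {f : E × F → G} {φ : 𝕜 → F} {a : E} {x : 𝕜}
    (hf : AnalyticAt 𝕜 f (a, φ x)) (hφ : AnalyticAt 𝕜 φ x) :
    ∀ᶠ h in 𝓝 a, AnalyticAt 𝕜 (fun t => f (h, φ t)) x := by
  have hpair : Tendsto (fun h => (h, φ x)) (𝓝 a) (𝓝 (a, φ x)) :=
    tendsto_id.prodMk_nhds tendsto_const_nhds
  filter_upwards [hpair.eventually hf.eventually_analyticAt] with h hh
  exact AnalyticAt.comp (f := fun t => (h, φ t)) hh (analyticAt_const.prod hφ)

section Independence

variable {𝕜 : Type*} [NontriviallyNormedField 𝕜] {e : ℕ → ℕ} {c : ℕ → 𝕜} {g : ℕ → 𝕜 → 𝕜}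

theorem coeff_zero_eq_zero_of_sum_mul_pow_mul_eq_zero (he : StrictMono e) {N : ℕ}
    (hg : ∀ j ≤ N, ContinuousAt (g j) 0) (hg0 : g 0 0 ≠ 0)
    (hsum : ∀ᶠ x in 𝓝[≠] 0, ∑ j ∈ range (N + 1), c j * x ^ e j * g j x = 0) :
    c 0 = 0 := by
  set G : 𝕜 → 𝕜 := fun x => ∑ j ∈ range (N + 1), c j * x ^ (e j - e 0) * g j x
  have hG0 : G 0 = c 0 * g 0 0 := by
    simp only [G, sum_range_succ', Nat.sub_self, pow_zero, mul_one, add_eq_right]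
    exact sum_eq_zero fun j _ => by
      rw [zero_pow (Nat.sub_ne_zero_of_lt (he j.succ_pos)), mul_zero, zero_mul]
  have hGcont : ContinuousAt G 0 :=
    tendsto_finsetSum _ fun j hj =>
      (continuousAt_const.mul (continuousAt_pow _ _)).mul (hg j (mem_range_succ_iff.mp hj))
  -- `x ^ e 0 * G x` is the given sum
  have hGzero : ∀ᶠ x in 𝓝[≠] 0, G x = 0 := by
    filter_upwards [hsum, self_mem_nhdsWithin] with x hx (hx0 : x ≠ 0)
    refine (mul_eq_zero.mp ?_).resolve_left (pow_ne_zero (e 0) hx0)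
    rw [← hx, mul_sum]
    refine sum_congr rfl fun j _ => ?_
    rw [← Nat.add_sub_cancel' (he.monotone j.zero_le), pow_add, Nat.add_sub_cancel_left]
    ring
  have : G 0 = 0 := tendsto_nhds_unique (hGcont.tendsto.mono_left nhdsWithin_le_nhds)
    (tendsto_const_nhds.congr' (EventuallyEq.symm hGzero))
  exact (mul_eq_zero.mp (hG0 ▸ this)).resolve_right hg0

theorem coeff_eq_zero_of_sum_mul_pow_mul_eq_zero (he : StrictMono e) {N : ℕ}
    (hg : ∀ j ≤ N, ContinuousAt (g j) 0) (hg0 : ∀ j ≤ N, g j 0 ≠ 0)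
    (hsum : ∀ᶠ x in 𝓝[≠] 0, ∑ j ∈ range (N + 1), c j * x ^ e j * g j x = 0) :
    ∀ j ≤ N, c j = 0 := by
  induction N generalizing e c g with
  | zero =>
    intro j hj
    rw [Nat.le_zero.mp hj]
    exact coeff_zero_eq_zero_of_sum_mul_pow_mul_eq_zero he hg (hg0 0 le_rfl) hsum
  | succ N ih =>
    have hc0 := coeff_zero_eq_zero_of_sum_mul_pow_mul_eq_zero he hg (hg0 0 (N + 1).zero_le) hsum
    have hsum' : ∀ᶠ x in 𝓝[≠] 0,
        ∑ j ∈ range (N + 1), c (j + 1) * x ^ e (j + 1) * g (j + 1) x = 0 := by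
      filter_upwards [hsum] with x hx
      rwa [sum_range_succ', hc0, zero_mul, zero_mul, add_zero] at hx
    have hc := ih (fun _ _ hab => he (Nat.succ_lt_succ hab))
      (fun j hj => hg _ (Nat.succ_le_succ hj)) (fun j hj => hg0 _ (Nat.succ_le_succ hj)) hsum'
    rintro (_ | j) hj
    · exact hc0
    · exact hc j (Nat.le_of_succ_le_succ hj)

end Independence

theorem melnikov_structure_general
    (n N : ℕ) (lamStar : Fin n → ℝ)
    (v : ℕ → (Fin n → ℝ) → ℝ)
    (hvpoly : ∀ j ≤ N, ∃ p : MvPolynomial (Fin n) ℝ,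
      ∀ x, v j x = MvPolynomial.eval x p)
    (b : ℕ → ℝ × (Fin n → ℝ) → ℝ)
    (hb : ∀ j ≤ N, AnalyticAt ℝ (b j) (0, lamStar))
    (hb0 : ∀ j ≤ N, b j (0, lamStar) ≠ 0)
    (lam : ℝ → (Fin n → ℝ))
    (hlam : AnalyticAt ℝ lam 0) (hlam0 : lam 0 = lamStar)
    (d : ℝ → ℝ → ℝ)
    (hd : ∀ h ε : ℝ, d h ε =
      ∑ j ∈ Finset.range (N + 1),
        v j (lam ε) * h ^ (2 * j + 1) * b j (h, lam ε))
    (vbar : ℕ → ℕ → ℝ)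
    (hvbar : ∀ j r, vbar j r =
      iteratedDeriv r (fun ε => v j (lam ε)) 0 / r.factorial)
    (B : ℕ → ℝ → ℝ) (hB : ∀ j h, B j h = b j (h, lamStar))
    (k : ℕ)
    (hflat : ∀ᶠ h in nhds (0 : ℝ), ∀ r < k,
      iteratedDeriv r (fun ε => d h ε) 0 = 0)
    (Mk : ℝ → ℝ)
    (hMk : ∀ h, Mk h = iteratedDeriv k (fun ε => d h ε) 0 / k.factorial) :
    (∀ j ≤ N, ∀ r, 1 ≤ r → r ≤ k - 1 → vbar j r = 0) ∧
    (∀ᶠ h in nhds (0 : ℝ), Mk h =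
      ∑ j ∈ Finset.range (N + 1), vbar j k * h ^ (2 * j + 1) * B j h) := by
  set V : ℕ → ℝ → ℝ := fun j ε => v j (lam ε)
  have hV : ∀ j ≤ N, AnalyticAt ℝ (V j) 0 := fun j hj => by
    obtain ⟨p, hp⟩ := hvpoly j hj
    simp only [V, hp]
    exact (AnalyticOnNhd.eval_mvPolynomial p (lam 0) trivial).comp hlam
  have hBcont : ∀ j ≤ N, ContinuousAt (B j) 0 := fun j hj => by
    rw [show B j = fun h => b j (h, lamStar) from funext (hB j)]
    exact (hb j hj).continuousAt.comp (f := fun h => (h, lamStar)) (by fun_prop)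
  have hbh : ∀ᶠ h in 𝓝 0, ∀ j ∈ range (N + 1), AnalyticAt ℝ (fun ε => b j (h, lam ε)) 0 :=
    (eventually_all_finset _).2 fun j hj =>
      (hlam0 ▸ hb j (mem_range_succ_iff.1 hj)).eventually_analyticAt_comp_prodMk hlam
  have hderiv : ∀ r, (∀ j ≤ N, ∀ s < r, iteratedDeriv s (V j) 0 = 0) →
      ∀ᶠ h in 𝓝 0, iteratedDeriv r (fun ε => d h ε) 0
        = ∑ j ∈ range (N + 1), iteratedDeriv r (V j) 0 * h ^ (2 * j + 1) * B j h := by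
    intro r hflatV
    filter_upwards [hbh] with h hbh
    simp only [hd]
    rw [iteratedDeriv_fun_sum_mul_const_mul_of_iteratedDeriv_eq_zero (f := V)
      (g := fun j ε => b j (h, lam ε)) (fun j => h ^ (2 * j + 1))
      (fun j hj => (hV j (mem_range_succ_iff.1 hj)).contDiffAt)
      (fun j hj => (hbh j hj).contDiffAt) (fun j hj => hflatV j (mem_range_succ_iff.1 hj))]
    simp only [hlam0, hB]
  have hflatV : ∀ r < k, ∀ j ≤ N, iteratedDeriv r (V j) 0 = 0 := by
    intro r
    induction r using Nat.strong_induction_on with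
    | _ r ih =>
      intro hr
      refine coeff_eq_zero_of_sum_mul_pow_mul_eq_zero (e := fun j => 2 * j + 1)
        (fun _ _ hab => by dsimp only; omega) hBcont (fun j hj => hB j 0 ▸ hb0 j hj) ?_
      filter_upwards [nhdsWithin_le_nhds (hderiv r fun j hj s hs => ih s hs (hs.trans hr) j hj),
        nhdsWithin_le_nhds hflat] with h hdr hfl
      rw [← hdr, hfl r hr]
  refine ⟨fun j hj r hr1 hrk => ?_, ?_⟩
  · rw [hvbar, hflatV r (by omega) j hj, zero_div]
  · filter_upwards [hderiv k fun j hj s hs => hflatV s hs j hj] with h hdk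
    rw [hMk, hdk, sum_div]
    exact sum_congr rfl fun j _ => by rw [hvbar]; ring

/-- Structure of the `k`-th Melnikov function: if the displacement map decomposes as
`d(h,ε) = Σ_j v_j(λ(ε)) h^(2j+1) b_j(h, λ(ε))` with `v_j` polynomial vanishing at `λ*`
and `b_j` analytic with `b_j(0,λ*) ≠ 0`, and all Taylor coefficients of order `< k`
of `ε ↦ d(h,ε)` vanish near `h = 0`, then all `v̄_{j,r}` vanish for `1 ≤ r ≤ k-1` and
`M_k(h) = Σ_j v̄_{j,k} h^(2j+1) B_j(h)` near `h = 0`. -/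
theorem melnikov_structure
    (n N : ℕ) (lamStar : Fin n → ℝ)
    (v : ℕ → (Fin n → ℝ) → ℝ)
    (hvpoly : ∀ j ≤ N, ∃ p : MvPolynomial (Fin n) ℝ,
      ∀ x, v j x = MvPolynomial.eval x p)
    (hvzero : ∀ j ≤ N, v j lamStar = 0)
    (b : ℕ → ℝ × (Fin n → ℝ) → ℝ)
    (hb : ∀ j ≤ N, AnalyticAt ℝ (b j) (0, lamStar))
    (hb0 : ∀ j ≤ N, b j (0, lamStar) ≠ 0)
    (lam : ℝ → (Fin n → ℝ))
    (hlam : AnalyticAt ℝ lam 0) (hlam0 : lam 0 = lamStar)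
    (d : ℝ → ℝ → ℝ)
    (hd : ∀ h ε : ℝ, d h ε =
      ∑ j ∈ Finset.range (N + 1),
        v j (lam ε) * h ^ (2 * j + 1) * b j (h, lam ε))
    (vbar : ℕ → ℕ → ℝ)
    (hvbar : ∀ j r, vbar j r =
      iteratedDeriv r (fun ε => v j (lam ε)) 0 / r.factorial)
    (B : ℕ → ℝ → ℝ) (hB : ∀ j h, B j h = b j (h, lamStar))
    (k : ℕ) (hk : 1 ≤ k)
    (hflat : ∀ᶠ h in nhds (0 : ℝ), ∀ r < k,
      iteratedDeriv r (fun ε => d h ε) 0 = 0)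
    (Mk : ℝ → ℝ)
    (hMk : ∀ h, Mk h = iteratedDeriv k (fun ε => d h ε) 0 / k.factorial) :
    (∀ j ≤ N, ∀ r, 1 ≤ r → r ≤ k - 1 → vbar j r = 0) ∧
    (∀ᶠ h in nhds (0 : ℝ), Mk h =
      ∑ j ∈ Finset.range (N + 1), vbar j k * h ^ (2 * j + 1) * B j h) :=
  melnikov_structure_general n N lamStar v hvpoly b hb hb0 lam hlam hlam0 d hd vbar hvbar B hB k
    hflat Mk hMk
end

section
/- (Generic Lotka–Volterra case.) Assume λ_{1,0} = 0, λ_{3,0} = λ_{6,0} and λ_{5,0} ≠ 0. Let k ≥ 1 be an integer and suppose v̄_{1,j} = v̄_{3,j} = 0 for all 0 ≤ j ≤ k−1. Then v̄_{1,k} = λ_{1,k}, v̄_{3,k} = λ_{5,0}(λ_{3,k} − λ_{6,k}), v̄_{5,k} = λ_{2,0} λ_{4,0}² (λ_{3,k} − λ_{6,k}), and v̄_{7,k} = 0. -/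
/-!
Since `l5` is a unit, `X ^ k ∣ v3 = l5 * (l3 - l6)` forces `X ^ k ∣ l3 - l6`. Coefficient `k` of
any multiple `f * (l3 - l6)` is then `f(0) * coeff k (l3 - l6)`, which gives `v3` and `v5`, while
`(l3 - l6) ^ 2` is divisible by `X ^ (2 * k)` and so `v7` vanishes to order `2 * k > k`.
-/

open PowerSeries

namespace PowerSeries

variable {R : Type*} [CommSemiring R]

theorem coeff_mul_of_X_pow_dvd {f d : R⟦X⟧} {k : ℕ} (hd : X ^ k ∣ d) :
    coeff k (f * d) = constantCoeff f * coeff k d := by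
  obtain ⟨e, rfl⟩ := hd
  simp [mul_left_comm f, coeff_X_pow_mul']

theorem coeff_eq_zero_of_X_pow_succ_dvd {φ : R⟦X⟧} {k : ℕ} (h : X ^ (k + 1) ∣ φ) :
    coeff k φ = 0 :=
  X_pow_dvd_iff.mp h k k.lt_succ_self

end PowerSeries

theorem generic_lotka_volterra_general
    (l1 l2 l3 l4 l5 l6 : PowerSeries ℝ)
    (v1 v3 v5 v7 : PowerSeries ℝ)
    (hv1 : v1 = l1)
    (hv3 : v3 = l5 * (l3 - l6))
    (hv5 : v5 = l2 * l4 * (l3 - l6) * (l4 + 5 * l3 - 5 * l6))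
    (hv7 : v7 = l2 * l4 * (l3 - l6) ^ 2 * (l3 * l6 - 2 * l6 ^ 2 - l2 ^ 2))
    (h36 : coeff 0 l3 = coeff 0 l6)
    (h50 : coeff 0 l5 ≠ 0)
    (k : ℕ) (hk : 1 ≤ k)
    (hvan : ∀ j < k, coeff j v1 = 0 ∧ coeff j v3 = 0) :
    coeff k v1 = coeff k l1 ∧
    coeff k v3 = coeff 0 l5 * (coeff k l3 - coeff k l6) ∧
    coeff k v5 = coeff 0 l2 * (coeff 0 l4) ^ 2 * (coeff k l3 - coeff k l6) ∧
    coeff k v7 = 0 := by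
  simp only [coeff_zero_eq_constantCoeff_apply] at h36 h50 ⊢
  have hl5 : IsUnit l5 := isUnit_iff_constantCoeff.mpr h50.isUnit
  have hd : X ^ k ∣ l3 - l6 :=
    hl5.dvd_mul_left.mp (hv3 ▸ X_pow_dvd_iff.mpr fun j hj => (hvan j hj).2)
  have hd2 : X ^ (k + 1) ∣ (l3 - l6) ^ 2 :=
    calc X ^ (k + 1) ∣ (X ^ k) ^ 2 := by rw [← pow_mul]; exact pow_dvd_pow X (by omega)
      _ ∣ (l3 - l6) ^ 2 := pow_dvd_pow_of_dvd hd 2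
  refine ⟨hv1 ▸ rfl, ?_, ?_, ?_⟩
  · rw [hv3, coeff_mul_of_X_pow_dvd hd, map_sub]
  · rw [hv5, mul_right_comm _ (l3 - l6), coeff_mul_of_X_pow_dvd hd]
    simp only [map_mul, map_add, map_sub, map_ofNat, h36]
    ring
  · exact hv7 ▸ coeff_eq_zero_of_X_pow_succ_dvd ((hd2.mul_left _).mul_right _)

/-- Generic Lotka–Volterra case. -/
theorem generic_lotka_volterra
    (l1 l2 l3 l4 l5 l6 : PowerSeries ℝ)
    (v1 v3 v5 v7 : PowerSeries ℝ)
    (hv1 : v1 = l1)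
    (hv3 : v3 = l5 * (l3 - l6))
    (hv5 : v5 = l2 * l4 * (l3 - l6) * (l4 + 5 * l3 - 5 * l6))
    (hv7 : v7 = l2 * l4 * (l3 - l6) ^ 2 * (l3 * l6 - 2 * l6 ^ 2 - l2 ^ 2))
    (h10 : coeff 0 l1 = 0)
    (h36 : coeff 0 l3 = coeff 0 l6)
    (h50 : coeff 0 l5 ≠ 0)
    (k : ℕ) (hk : 1 ≤ k)
    (hvan : ∀ j < k, coeff j v1 = 0 ∧ coeff j v3 = 0) :
    coeff k v1 = coeff k l1 ∧
    coeff k v3 = coeff 0 l5 * (coeff k l3 - coeff k l6) ∧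
    coeff k v5 = coeff 0 l2 * (coeff 0 l4) ^ 2 * (coeff k l3 - coeff k l6) ∧
    coeff k v7 = 0 :=
  generic_lotka_volterra_general l1 l2 l3 l4 l5 l6 v1 v3 v5 v7 hv1 hv3 hv5 hv7 h36 h50 k hk hvan
end

section
/- (Generic Hamiltonian case.) Assume λ_{1,0} = λ_{4,0} = λ_{5,0} = 0 and λ_{2,0}(λ_{3,0} − λ_{6,0}) ≠ 0. Let k ≥ 1 be an integer and suppose v̄_{1,j} = v̄_{3,j} = v̄_{5,j} = 0 for all 0 ≤ j ≤ k−1. Then v̄_{1,k} = λ_{1,k}, v̄_{3,k} = (λ_{3,0} − λ_{6,0}) λ_{5,k}, v̄_{5,k} = 5 λ_{2,0}(λ_{3,0} − λ_{6,0})² λ_{4,k}, and v̄_{7,k} = λ_{2,0}(λ_{3,0} − λ_{6,0})²(λ_{3,0}λ_{6,0}−2λ_{6,0}²−λ_{2,0}²) λ_{4,k}. -/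
open PowerSeries

/-! Write `v₃ = λ₅ · (λ₃ − λ₆)` and `v₅ = λ₄ · λ₂(λ₃ − λ₆)(λ₄ + 5λ₃ − 5λ₆)`. As `λ₄` has no
constant term, the second factors have constant terms `λ₃,₀ − λ₆,₀` and `5λ₂,₀(λ₃,₀ − λ₆,₀)²`,
both nonzero, so they are units of `ℝ⟦ε⟧`. Hence the vanishing of the first `k` coefficients of
`v₃` and `v₅` says `ε^k ∣ λ₅` and `ε^k ∣ λ₄`, and when `ε^k ∣ φ` the `k`-th coefficient of `φ ψ`
is just `φ_k ψ_0`. -/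

namespace PowerSeries

theorem coeff_mul_of_X_pow_dvd_s4 {R : Type*} [Semiring R] {n : ℕ} {φ : R⟦X⟧} (ψ : R⟦X⟧)
    (h : X ^ n ∣ φ) : coeff n (φ * ψ) = coeff n φ * constantCoeff ψ := by
  obtain ⟨c, rfl⟩ := h
  simp [mul_assoc, coeff_X_pow_mul']

theorem X_pow_dvd_of_dvd_mul_of_constantCoeff_ne_zero {K : Type*} [Field K] {n : ℕ}
    {φ ψ : K⟦X⟧} (hψ : constantCoeff ψ ≠ 0) (h : X ^ n ∣ φ * ψ) : X ^ n ∣ φ :=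
  (isUnit_iff_constantCoeff.2 hψ.isUnit).dvd_mul_right.1 h

end PowerSeries

theorem generic_hamiltonian_general
    (l1 l2 l3 l4 l5 l6 : PowerSeries ℝ)
    (v1 v3 v5 v7 : PowerSeries ℝ)
    (hv1 : v1 = l1)
    (hv3 : v3 = l5 * (l3 - l6))
    (hv5 : v5 = l2 * l4 * (l3 - l6) * (l4 + 5 * l3 - 5 * l6))
    (hv7 : v7 = l2 * l4 * (l3 - l6) ^ 2 * (l3 * l6 - 2 * l6 ^ 2 - l2 ^ 2))
    (h40 : coeff 0 l4 = 0)
    (hgen : coeff 0 l2 * (coeff 0 l3 - coeff 0 l6) ≠ 0)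
    (k : ℕ)
    (hvan : ∀ j < k, coeff j v1 = 0 ∧ coeff j v3 = 0 ∧ coeff j v5 = 0) :
    coeff k v1 = coeff k l1 ∧
    coeff k v3 = (coeff 0 l3 - coeff 0 l6) * coeff k l5 ∧
    coeff k v5 = 5 * coeff 0 l2 * (coeff 0 l3 - coeff 0 l6) ^ 2 * coeff k l4 ∧
    coeff k v7 = coeff 0 l2 * (coeff 0 l3 - coeff 0 l6) ^ 2
      * (coeff 0 l3 * coeff 0 l6 - 2 * (coeff 0 l6) ^ 2 - (coeff 0 l2) ^ 2) * coeff k l4 := by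
  simp only [coeff_zero_eq_constantCoeff_apply] at h40 hgen ⊢
  obtain ⟨hl2, hd⟩ := mul_ne_zero_iff.1 hgen
  set g5 := l2 * (l3 - l6) * (l4 + 5 * l3 - 5 * l6)
  set g7 := l2 * (l3 - l6) ^ 2 * (l3 * l6 - 2 * l6 ^ 2 - l2 ^ 2)
  have hv5' : v5 = l4 * g5 := by rw [hv5]; ring
  have hv7' : v7 = l4 * g7 := by rw [hv7]; ring
  have hg5 : constantCoeff g5 =
      5 * constantCoeff l2 * (constantCoeff l3 - constantCoeff l6) ^ 2 := by
    simp only [g5, map_mul, map_sub, map_add, map_ofNat, h40]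
    ring
  have hl5 : X ^ k ∣ l5 := X_pow_dvd_of_dvd_mul_of_constantCoeff_ne_zero (by rwa [map_sub])
    (hv3 ▸ X_pow_dvd_iff.2 fun j hj => (hvan j hj).2.1)
  have hl4 : X ^ k ∣ l4 := X_pow_dvd_of_dvd_mul_of_constantCoeff_ne_zero
    (by rw [hg5]; simp [hl2, hd])
    (hv5' ▸ X_pow_dvd_iff.2 fun j hj => (hvan j hj).2.2)
  refine ⟨by rw [hv1], ?_, ?_, ?_⟩
  · rw [hv3, coeff_mul_of_X_pow_dvd_s4 _ hl5, mul_comm, map_sub]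
  · rw [hv5', coeff_mul_of_X_pow_dvd_s4 _ hl4, hg5, mul_comm]
  · rw [hv7', coeff_mul_of_X_pow_dvd_s4 _ hl4, mul_comm]
    simp only [g7, map_mul, map_sub, map_pow, map_ofNat]

/-- Generic Hamiltonian case. -/
theorem generic_hamiltonian
    (l1 l2 l3 l4 l5 l6 : PowerSeries ℝ)
    (v1 v3 v5 v7 : PowerSeries ℝ)
    (hv1 : v1 = l1)
    (hv3 : v3 = l5 * (l3 - l6))
    (hv5 : v5 = l2 * l4 * (l3 - l6) * (l4 + 5 * l3 - 5 * l6))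
    (hv7 : v7 = l2 * l4 * (l3 - l6) ^ 2 * (l3 * l6 - 2 * l6 ^ 2 - l2 ^ 2))
    (h10 : coeff 0 l1 = 0)
    (h40 : coeff 0 l4 = 0)
    (h50 : coeff 0 l5 = 0)
    (hgen : coeff 0 l2 * (coeff 0 l3 - coeff 0 l6) ≠ 0)
    (k : ℕ) (hk : 1 ≤ k)
    (hvan : ∀ j < k, coeff j v1 = 0 ∧ coeff j v3 = 0 ∧ coeff j v5 = 0) :
    coeff k v1 = coeff k l1 ∧
    coeff k v3 = (coeff 0 l3 - coeff 0 l6) * coeff k l5 ∧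
    coeff k v5 = 5 * coeff 0 l2 * (coeff 0 l3 - coeff 0 l6) ^ 2 * coeff k l4 ∧
    coeff k v7 = coeff 0 l2 * (coeff 0 l3 - coeff 0 l6) ^ 2
      * (coeff 0 l3 * coeff 0 l6 - 2 * (coeff 0 l6) ^ 2 - (coeff 0 l2) ^ 2) * coeff k l4 :=
  generic_hamiltonian_general l1 l2 l3 l4 l5 l6 v1 v3 v5 v7 hv1 hv3 hv5 hv7 h40 hgen k hvan
end

section
/- (Generic Darboux case.) Assume λ_{1,0} = λ_{5,0} = 0, λ_{4,0}+5λ_{3,0}−5λ_{6,0} = 0, λ_{3,0}λ_{6,0}−2λ_{6,0}²−λ_{2,0}² = 0, and λ_{2,0}λ_{4,0}(λ_{3,0} − λ_{6,0}) ≠ 0. Then v̄_{1,1} = λ_{1,1}, v̄_{3,1} = (λ_{3,0} − λ_{6,0}) λ_{5,1}, v̄_{5,1} = λ_{2,0}λ_{4,0}(λ_{3,0} − λ_{6,0})(λ_{4,1}+5λ_{3,1}−5λ_{6,1}), and v̄_{7,1} = λ_{2,0}λ_{4,0}(λ_{3,0} − λ_{6,0})²(λ_{3,0}λ_{6,1}+λ_{6,0}λ_{3,1}−4λ_{6,0}λ_{6,1}−2λ_{2,0}λ_{2,1}).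 -/
open PowerSeries

/-!
Under the hypotheses, each of `v₃, v₅, v₇` factors as `f * g` where `g` (namely `λ₅`,
`λ₄ + 5λ₃ - 5λ₆` and `λ₃λ₆ - 2λ₆² - λ₂²`) vanishes at `ε = 0`. By the Leibniz rule for the
`ε`-coefficient, the `ε`-coefficient of such a product is `f(0)` times that of `g`.
-/

theorem PowerSeries.coeff_one_mul_of_constantCoeff_eq_zero {R : Type*} [CommSemiring R]
    {f g : R⟦X⟧} (hg : constantCoeff g = 0) :
    coeff 1 (f * g) = constantCoeff f * coeff 1 g := by
  rw [coeff_one_mul, hg, mul_zero, zero_add, mul_comm]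

@[simp]
theorem PowerSeries.constantCoeff_ofNat {R : Type*} [CommSemiring R] (n : ℕ) [n.AtLeastTwo] :
    constantCoeff (ofNat(n) : R⟦X⟧) = ofNat(n) :=
  map_ofNat constantCoeff n

@[simp]
theorem PowerSeries.coeff_ofNat_mul {R : Type*} [CommSemiring R] (n k : ℕ) [n.AtLeastTwo]
    (f : R⟦X⟧) : coeff k (ofNat(n) * f) = ofNat(n) * coeff k f := by
  rw [← map_ofNat C n, coeff_C_mul]

theorem generic_darboux_general
    (l1 l2 l3 l4 l5 l6 : PowerSeries ℝ)
    (v1 v3 v5 v7 : PowerSeries ℝ)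
    (hv1 : v1 = l1)
    (hv3 : v3 = l5 * (l3 - l6))
    (hv5 : v5 = l2 * l4 * (l3 - l6) * (l4 + 5 * l3 - 5 * l6))
    (hv7 : v7 = l2 * l4 * (l3 - l6) ^ 2 * (l3 * l6 - 2 * l6 ^ 2 - l2 ^ 2))
    (h50 : coeff 0 l5 = 0)
    (hD1 : coeff 0 l4 + 5 * coeff 0 l3 - 5 * coeff 0 l6 = 0)
    (hD2 : coeff 0 l3 * coeff 0 l6 - 2 * (coeff 0 l6) ^ 2 - (coeff 0 l2) ^ 2 = 0) :
    coeff 1 v1 = coeff 1 l1 ∧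
    coeff 1 v3 = (coeff 0 l3 - coeff 0 l6) * coeff 1 l5 ∧
    coeff 1 v5 = coeff 0 l2 * coeff 0 l4 * (coeff 0 l3 - coeff 0 l6)
      * (coeff 1 l4 + 5 * coeff 1 l3 - 5 * coeff 1 l6) ∧
    coeff 1 v7 = coeff 0 l2 * coeff 0 l4 * (coeff 0 l3 - coeff 0 l6) ^ 2
      * (coeff 0 l3 * coeff 1 l6 + coeff 0 l6 * coeff 1 l3
        - 4 * coeff 0 l6 * coeff 1 l6 - 2 * coeff 0 l2 * coeff 1 l2) := by
  subst hv1 hv3 hv5 hv7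
  simp only [coeff_zero_eq_constantCoeff] at *
  refine ⟨trivial, ?_, ?_, ?_⟩
  · rw [mul_comm, coeff_one_mul_of_constantCoeff_eq_zero h50, map_sub]
  · rw [coeff_one_mul_of_constantCoeff_eq_zero (by simpa using hD1)]
    simp only [map_mul, map_sub, map_add, coeff_ofNat_mul]
  · rw [coeff_one_mul_of_constantCoeff_eq_zero (by simpa using hD2)]
    simp only [map_mul, map_sub, pow_two, coeff_one_mul, coeff_ofNat_mul]
    ring

/-- Generic Darboux case. -/
theorem generic_darboux
    (l1 l2 l3 l4 l5 l6 : PowerSeries ℝ)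
    (v1 v3 v5 v7 : PowerSeries ℝ)
    (hv1 : v1 = l1)
    (hv3 : v3 = l5 * (l3 - l6))
    (hv5 : v5 = l2 * l4 * (l3 - l6) * (l4 + 5 * l3 - 5 * l6))
    (hv7 : v7 = l2 * l4 * (l3 - l6) ^ 2 * (l3 * l6 - 2 * l6 ^ 2 - l2 ^ 2))
    (h10 : coeff 0 l1 = 0)
    (h50 : coeff 0 l5 = 0)
    (hD1 : coeff 0 l4 + 5 * coeff 0 l3 - 5 * coeff 0 l6 = 0)
    (hD2 : coeff 0 l3 * coeff 0 l6 - 2 * (coeff 0 l6) ^ 2 - (coeff 0 l2) ^ 2 = 0)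
    (hgen : coeff 0 l2 * coeff 0 l4 * (coeff 0 l3 - coeff 0 l6) ≠ 0) :
    coeff 1 v1 = coeff 1 l1 ∧
    coeff 1 v3 = (coeff 0 l3 - coeff 0 l6) * coeff 1 l5 ∧
    coeff 1 v5 = coeff 0 l2 * coeff 0 l4 * (coeff 0 l3 - coeff 0 l6)
      * (coeff 1 l4 + 5 * coeff 1 l3 - 5 * coeff 1 l6) ∧
    coeff 1 v7 = coeff 0 l2 * coeff 0 l4 * (coeff 0 l3 - coeff 0 l6) ^ 2
      * (coeff 0 l3 * coeff 1 l6 + coeff 0 l6 * coeff 1 l3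
        - 4 * coeff 0 l6 * coeff 1 l6 - 2 * coeff 0 l2 * coeff 1 l2) :=
  generic_darboux_general l1 l2 l3 l4 l5 l6 v1 v3 v5 v7 hv1 hv3 hv5 hv7 h50 hD1 hD2
end

section
/- (Symmetric Lotka–Volterra case.) Assume λ_{1,0} = λ_{2,0} = λ_{5,0} = 0, λ_{3,0} = λ_{6,0} and λ_{4,0} ≠ 0. Then v̄_{1,1} = λ_{1,1} and v̄_{3,1} = v̄_{5,1} = v̄_{7,1} = 0. If moreover λ_{1,1} = 0, then v̄_{1,2} = λ_{1,2}, v̄_{3,2} = (λ_{3,1} − λ_{6,1}) λ_{5,1}, v̄_{5,2} = λ_{4,0}² λ_{2,1}(λ_{3,1} − λ_{6,1}), and v̄_{7,2} = 0. Furthermore, for every integer k ≥ 2, if v̄_{5,j} = 0 for all 0 ≤ j ≤ k−1 then v̄_{7,k} = 0. -/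
/-!
Put `a = λ₃ - λ₆`. The hypotheses say that `ε` divides `λ₂`, `λ₅` and `a`, so `ε²` divides
`m = λ₂ a`, and they factor `v₅ = m g` with `g = λ₄ (λ₄ + 5a)` a unit of constant term `λ₄,₀²`,
and `v₇ = m h` with `ε ∣ h`. The coefficient of `εⁱ⁺ʲ` in a product of a multiple of `εⁱ` and a
multiple of `εʲ` is the product of the coefficients of `εⁱ` and `εʲ`; this gives the first- and
second-order coefficients. Finally, if `v₅ = m g` vanishes to order `k` then so does `m`, because
`g` is a unit, hence `v₇ = m h` vanishes to order `k + 1`.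
-/

open PowerSeries

namespace PowerSeries

variable {R : Type*} [CommSemiring R]

theorem coeff_add_mul_of_X_pow_dvd {f g : R⟦X⟧} {i j : ℕ} (hf : X ^ i ∣ f) (hg : X ^ j ∣ g) :
    coeff (i + j) (f * g) = coeff i f * coeff j g := by
  have coeff_X_pow_mul_self (n : ℕ) (p : R⟦X⟧) : coeff n (X ^ n * p) = coeff 0 p := by
    simpa using coeff_X_pow_mul p n 0
  obtain ⟨f, rfl⟩ := hf
  obtain ⟨g, rfl⟩ := hg
  rw [mul_mul_mul_comm, ← pow_add, coeff_X_pow_mul_self, coeff_X_pow_mul_self,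
    coeff_X_pow_mul_self]
  simp only [coeff_zero_eq_constantCoeff_apply, map_mul]

theorem coeff_mul_of_X_pow_dvd_left {f : R⟦X⟧} {n : ℕ} (hf : X ^ n ∣ f) (g : R⟦X⟧) :
    coeff n (f * g) = coeff n f * coeff 0 g := by
  simpa only [add_zero] using
    coeff_add_mul_of_X_pow_dvd (j := 0) hf (by rw [pow_zero]; exact one_dvd g)

theorem coeff_two_mul_of_X_dvd {f g : R⟦X⟧} (hf : X ∣ f) (hg : X ∣ g) :
    coeff 2 (f * g) = coeff 1 f * coeff 1 g :=
  coeff_add_mul_of_X_pow_dvd (i := 1) (j := 1) (by rwa [pow_one]) (by rwa [pow_one])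

theorem X_pow_succ_dvd_mul_of_X_pow_dvd_mul_isUnit {m g h : R⟦X⟧} {k : ℕ} (hg : IsUnit g)
    (hh : X ∣ h) (hk : X ^ k ∣ m * g) : X ^ (k + 1) ∣ m * h :=
  pow_succ (X : R⟦X⟧) k ▸ mul_dvd_mul (hg.dvd_mul_right.mp hk) hh

end PowerSeries

theorem symmetric_lotka_volterra_general
    (l1 l2 l3 l4 l5 l6 : PowerSeries ℝ)
    (v1 v3 v5 v7 : PowerSeries ℝ)
    (hv1 : v1 = l1)
    (hv3 : v3 = l5 * (l3 - l6))
    (hv5 : v5 = l2 * l4 * (l3 - l6) * (l4 + 5 * l3 - 5 * l6))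
    (hv7 : v7 = l2 * l4 * (l3 - l6) ^ 2 * (l3 * l6 - 2 * l6 ^ 2 - l2 ^ 2))
    (h20 : coeff 0 l2 = 0)
    (h50 : coeff 0 l5 = 0)
    (h36 : coeff 0 l3 = coeff 0 l6)
    (h40 : coeff 0 l4 ≠ 0) :
    coeff 1 v1 = coeff 1 l1 ∧ coeff 1 v3 = 0 ∧ coeff 1 v5 = 0 ∧ coeff 1 v7 = 0 ∧
    (coeff 1 l1 = 0 →
      coeff 2 v1 = coeff 2 l1 ∧
      coeff 2 v3 = (coeff 1 l3 - coeff 1 l6) * coeff 1 l5 ∧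
      coeff 2 v5 = (coeff 0 l4) ^ 2 * coeff 1 l2 * (coeff 1 l3 - coeff 1 l6) ∧
      coeff 2 v7 = 0) ∧
    (∀ k : ℕ, 2 ≤ k → (∀ j < k, coeff j v5 = 0) → coeff k v7 = 0) := by
  simp only [coeff_zero_eq_constantCoeff_apply] at h20 h50 h36
  have ha : X ∣ l3 - l6 := X_dvd_iff.mpr (by rw [map_sub, h36, sub_self])
  have hm : X ^ 2 ∣ l2 * (l3 - l6) := by rw [sq]; exact mul_dvd_mul (X_dvd_iff.mpr h20) ha
  set g := l4 * (l4 + 5 * (l3 - l6))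
  have hg0 : coeff 0 g = coeff 0 l4 ^ 2 := by simp [g, coeff_zero_eq_constantCoeff_apply, h36, sq]
  have hg : IsUnit g := isUnit_iff_constantCoeff.mpr <| by
    rw [← coeff_zero_eq_constantCoeff_apply, hg0]; exact (pow_ne_zero 2 h40).isUnit
  replace hv5 : v5 = l2 * (l3 - l6) * g := by rw [hv5]; ring
  replace hv7 : v7 = l2 * (l3 - l6) * ((l3 - l6) * (l4 * (l3 * l6 - 2 * l6 ^ 2 - l2 ^ 2))) := by
    rw [hv7]; ring
  have hv7_dvd (k : ℕ) (hk : X ^ k ∣ v5) : X ^ (k + 1) ∣ v7 :=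
    hv7 ▸ X_pow_succ_dvd_mul_of_X_pow_dvd_mul_isUnit hg (dvd_mul_of_dvd_left ha _) (hv5 ▸ hk)
  have hv3_dvd : X ^ 2 ∣ v3 := by rw [hv3, sq]; exact mul_dvd_mul (X_dvd_iff.mpr h50) ha
  have hv5_dvd : X ^ 2 ∣ v5 := hv5 ▸ dvd_mul_of_dvd_left hm g
  have hv7_dvd_three := hv7_dvd 2 hv5_dvd
  refine ⟨by rw [hv1], X_pow_dvd_iff.mp hv3_dvd 1 one_lt_two, X_pow_dvd_iff.mp hv5_dvd 1 one_lt_two,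
    X_pow_dvd_iff.mp hv7_dvd_three 1 (by norm_num),
    fun _ => ⟨by rw [hv1], ?_, ?_, X_pow_dvd_iff.mp hv7_dvd_three 2 (by norm_num)⟩,
    fun k _ hk => X_pow_dvd_iff.mp (hv7_dvd k (X_pow_dvd_iff.mpr hk)) k k.lt_succ_self⟩
  · rw [hv3, coeff_two_mul_of_X_dvd (X_dvd_iff.mpr h50) ha, map_sub, mul_comm]
  · rw [hv5, coeff_mul_of_X_pow_dvd_left hm, coeff_two_mul_of_X_dvd (X_dvd_iff.mpr h20) ha, hg0,
      map_sub]
    ring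

/-- Symmetric Lotka–Volterra case. -/
theorem symmetric_lotka_volterra
    (l1 l2 l3 l4 l5 l6 : PowerSeries ℝ)
    (v1 v3 v5 v7 : PowerSeries ℝ)
    (hv1 : v1 = l1)
    (hv3 : v3 = l5 * (l3 - l6))
    (hv5 : v5 = l2 * l4 * (l3 - l6) * (l4 + 5 * l3 - 5 * l6))
    (hv7 : v7 = l2 * l4 * (l3 - l6) ^ 2 * (l3 * l6 - 2 * l6 ^ 2 - l2 ^ 2))
    (h10 : coeff 0 l1 = 0)
    (h20 : coeff 0 l2 = 0)
    (h50 : coeff 0 l5 = 0)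
    (h36 : coeff 0 l3 = coeff 0 l6)
    (h40 : coeff 0 l4 ≠ 0) :
    coeff 1 v1 = coeff 1 l1 ∧ coeff 1 v3 = 0 ∧ coeff 1 v5 = 0 ∧ coeff 1 v7 = 0 ∧
    (coeff 1 l1 = 0 →
      coeff 2 v1 = coeff 2 l1 ∧
      coeff 2 v3 = (coeff 1 l3 - coeff 1 l6) * coeff 1 l5 ∧
      coeff 2 v5 = (coeff 0 l4) ^ 2 * coeff 1 l2 * (coeff 1 l3 - coeff 1 l6) ∧
      coeff 2 v7 = 0) ∧
    (∀ k : ℕ, 2 ≤ k → (∀ j < k, coeff j v5 = 0) → coeff k v7 = 0) :=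
  symmetric_lotka_volterra_general l1 l2 l3 l4 l5 l6 v1 v3 v5 v7 hv1 hv3 hv5 hv7 h20 h50 h36 h40
end

section
/- (Hamiltonian Lotka–Volterra case, orders 4 and 5.) Assume λ_{1,0} = λ_{4,0} = λ_{5,0} = 0, λ_{3,0} = λ_{6,0} and λ_{2,0} ≠ 0. (a) If λ_{3,1} ≠ λ_{6,1}, λ_{1,1} = λ_{1,2} = λ_{1,3} = 0, λ_{5,1} = λ_{5,2} = 0, and λ_{4,1} = 0, then v̄_{1,4} = λ_{1,4}, v̄_{3,4} = (λ_{3,1} − λ_{6,1}) λ_{5,3}, v̄_{5,4} = 5 λ_{2,0}(λ_{3,1} − λ_{6,1})² λ_{4,2}, and v̄_{7,4} = −λ_{2,0}(λ_{6,0}² + λ_{2,0}²)(λ_{3,1} − λ_{6,1})² λ_{4,2}. (b) If instead λ_{1,1} = λ_{1,2} = λ_{1,3} = λ_{1,4} = 0, λ_{5,1} = 0, λ_{3,1} = λ_{6,1} and λ_{3,2} = λ_{6,2}, then v̄_{1,j} = v̄_{3,j} = v̄_{5,j} = v̄_{7,j} = 0 for all 1 ≤ j ≤ 4, and v̄_{1,5}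 = λ_{1,5}, v̄_{3,5} = (λ_{3,3} − λ_{6,3}) λ_{5,2}, v̄_{5,5} = λ_{2,0} λ_{4,1}² (λ_{3,3} − λ_{6,3}), v̄_{7,5} = 0. -/
/-!
The vanishing hypotheses say exactly that `λ₄`, `λ₅` and `λ₃ - λ₆` are divisible by suitable
powers of `ε` (`PowerSeries.X_pow_dvd_iff`). Substituting these factorizations, each Liapunov
constant becomes `ε ^ k` times an explicit cofactor, so its coefficient of `ε ^ k` is the
constant term of that cofactor, and all lower coefficients vanish.
-/

open PowerSeries

namespace PowerSeries

variable {R : Type*} [CommRing R]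

theorem exists_eq_add_X_pow_mul_of_forall_coeff_eq {f g : R⟦X⟧} {n : ℕ}
    (h : ∀ m < n, coeff m f = coeff m g) : ∃ e, f = g + X ^ n * e := by
  obtain ⟨e, he⟩ : X ^ n ∣ f - g := X_pow_dvd_iff.2 fun m hm => by rw [map_sub, h m hm, sub_self]
  exact ⟨e, sub_eq_iff_eq_add'.1 he⟩

theorem coeff_four_liapunov_constants {l2 l3 l4 l5 l6 : R⟦X⟧}
    (h40 : coeff 0 l4 = 0) (h41 : coeff 1 l4 = 0)
    (h50 : coeff 0 l5 = 0) (h51 : coeff 1 l5 = 0) (h52 : coeff 2 l5 = 0)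
    (h36 : coeff 0 l3 = coeff 0 l6) :
    coeff 4 (l5 * (l3 - l6)) = (coeff 1 l3 - coeff 1 l6) * coeff 3 l5 ∧
    coeff 4 (l2 * l4 * (l3 - l6) * (l4 + 5 * l3 - 5 * l6)) =
      5 * coeff 0 l2 * (coeff 1 l3 - coeff 1 l6) ^ 2 * coeff 2 l4 ∧
    coeff 4 (l2 * l4 * (l3 - l6) ^ 2 * (l3 * l6 - 2 * l6 ^ 2 - l2 ^ 2)) =
      -(coeff 0 l2 * ((coeff 0 l6) ^ 2 + (coeff 0 l2) ^ 2)
        * (coeff 1 l3 - coeff 1 l6) ^ 2 * coeff 2 l4) := by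
  obtain ⟨a4, rfl⟩ : X ^ 2 ∣ l4 := X_pow_dvd_iff.2 fun m hm => by
    interval_cases m <;> assumption
  obtain ⟨a5, rfl⟩ : X ^ 3 ∣ l5 := X_pow_dvd_iff.2 fun m hm => by
    interval_cases m <;> assumption
  obtain ⟨e, rfl⟩ := exists_eq_add_X_pow_mul_of_forall_coeff_eq (n := 1) fun m hm => by
    interval_cases m; exact h36
  have h3 : X ^ 3 * a5 * (l6 + X ^ 1 * e - l6) = X ^ 4 * (a5 * e) := by ring
  have h5 : l2 * (X ^ 2 * a4) * (l6 + X ^ 1 * e - l6) *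
      (X ^ 2 * a4 + 5 * (l6 + X ^ 1 * e) - 5 * l6) =
      X ^ 4 * (l2 * a4 * e * (X * a4 + 5 * e)) := by ring
  have h7 : l2 * (X ^ 2 * a4) * (l6 + X ^ 1 * e - l6) ^ 2 *
      ((l6 + X ^ 1 * e) * l6 - 2 * l6 ^ 2 - l2 ^ 2) =
      X ^ 4 * (l2 * a4 * e ^ 2 * ((l6 + X * e) * l6 - 2 * l6 ^ 2 - l2 ^ 2)) := by ring
  rw [h3, h5, h7]
  refine ⟨?_, ?_, ?_⟩ <;> simp [coeff_X_pow_mul', map_ofNat] <;> ring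

theorem coeff_five_liapunov_constants {l2 l3 l4 l5 l6 : R⟦X⟧}
    (h40 : coeff 0 l4 = 0) (h50 : coeff 0 l5 = 0) (h51 : coeff 1 l5 = 0)
    (h36 : coeff 0 l3 = coeff 0 l6) (h361 : coeff 1 l3 = coeff 1 l6)
    (h362 : coeff 2 l3 = coeff 2 l6) :
    (∀ j < 5, coeff j (l5 * (l3 - l6)) = 0 ∧
      coeff j (l2 * l4 * (l3 - l6) * (l4 + 5 * l3 - 5 * l6)) = 0 ∧
      coeff j (l2 * l4 * (l3 - l6) ^ 2 * (l3 * l6 - 2 * l6 ^ 2 - l2 ^ 2)) = 0) ∧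
    coeff 5 (l5 * (l3 - l6)) = (coeff 3 l3 - coeff 3 l6) * coeff 2 l5 ∧
    coeff 5 (l2 * l4 * (l3 - l6) * (l4 + 5 * l3 - 5 * l6)) =
      coeff 0 l2 * (coeff 1 l4) ^ 2 * (coeff 3 l3 - coeff 3 l6) ∧
    coeff 5 (l2 * l4 * (l3 - l6) ^ 2 * (l3 * l6 - 2 * l6 ^ 2 - l2 ^ 2)) = 0 := by
  obtain ⟨a4, rfl⟩ : X ∣ l4 := X_dvd_iff.2 (by rwa [← coeff_zero_eq_constantCoeff_apply])
  obtain ⟨a5, rfl⟩ : X ^ 2 ∣ l5 := X_pow_dvd_iff.2 fun m hm => by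
    interval_cases m <;> assumption
  obtain ⟨e, rfl⟩ := exists_eq_add_X_pow_mul_of_forall_coeff_eq (n := 3) fun m hm => by
    interval_cases m <;> assumption
  have h3 : X ^ 2 * a5 * (l6 + X ^ 3 * e - l6) = X ^ 5 * (a5 * e) := by ring
  have h5 : l2 * (X * a4) * (l6 + X ^ 3 * e - l6) * (X * a4 + 5 * (l6 + X ^ 3 * e) - 5 * l6) =
      X ^ 5 * (l2 * a4 * e * (a4 + 5 * X ^ 2 * e)) := by ring
  have h7 : l2 * (X * a4) * (l6 + X ^ 3 * e - l6) ^ 2 *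
      ((l6 + X ^ 3 * e) * l6 - 2 * l6 ^ 2 - l2 ^ 2) =
      X ^ 5 * (X ^ 2 * (l2 * a4 * e ^ 2 * ((l6 + X ^ 3 * e) * l6 - 2 * l6 ^ 2 - l2 ^ 2))) := by
    ring
  rw [h3, h5, h7]
  refine ⟨fun j hj => ?_, ?_, ?_, ?_⟩
  · simp [coeff_X_pow_mul', not_le.2 hj]
  all_goals simp [coeff_X_pow_mul'] <;> ring

end PowerSeries

theorem hamiltonian_lotka_volterra_high_order_general
    (l1 l2 l3 l4 l5 l6 : PowerSeries ℝ)
    (v1 v3 v5 v7 : PowerSeries ℝ)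
    (hv1 : v1 = l1)
    (hv3 : v3 = l5 * (l3 - l6))
    (hv5 : v5 = l2 * l4 * (l3 - l6) * (l4 + 5 * l3 - 5 * l6))
    (hv7 : v7 = l2 * l4 * (l3 - l6) ^ 2 * (l3 * l6 - 2 * l6 ^ 2 - l2 ^ 2))
    (h40 : coeff 0 l4 = 0)
    (h50 : coeff 0 l5 = 0)
    (h36 : coeff 0 l3 = coeff 0 l6) :
    (coeff 1 l3 ≠ coeff 1 l6 → coeff 1 l1 = 0 → coeff 2 l1 = 0 → coeff 3 l1 = 0 →
      coeff 1 l5 = 0 → coeff 2 l5 = 0 → coeff 1 l4 = 0 →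
      coeff 4 v1 = coeff 4 l1 ∧
      coeff 4 v3 = (coeff 1 l3 - coeff 1 l6) * coeff 3 l5 ∧
      coeff 4 v5 = 5 * coeff 0 l2 * (coeff 1 l3 - coeff 1 l6) ^ 2 * coeff 2 l4 ∧
      coeff 4 v7 = -(coeff 0 l2 * ((coeff 0 l6) ^ 2 + (coeff 0 l2) ^ 2)
        * (coeff 1 l3 - coeff 1 l6) ^ 2 * coeff 2 l4)) ∧
    (coeff 1 l1 = 0 → coeff 2 l1 = 0 → coeff 3 l1 = 0 → coeff 4 l1 = 0 →
      coeff 1 l5 = 0 → coeff 1 l3 = coeff 1 l6 → coeff 2 l3 = coeff 2 l6 →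
      (∀ j : ℕ, 1 ≤ j → j ≤ 4 →
        coeff j v1 = 0 ∧ coeff j v3 = 0 ∧ coeff j v5 = 0 ∧ coeff j v7 = 0) ∧
      coeff 5 v1 = coeff 5 l1 ∧
      coeff 5 v3 = (coeff 3 l3 - coeff 3 l6) * coeff 2 l5 ∧
      coeff 5 v5 = coeff 0 l2 * (coeff 1 l4) ^ 2 * (coeff 3 l3 - coeff 3 l6) ∧
      coeff 5 v7 = 0) := by
  subst hv1 hv3 hv5 hv7
  refine ⟨fun _ _ _ _ h51 h52 h41 => ⟨rfl, coeff_four_liapunov_constants h40 h41 h50 h51 h52 h36⟩,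
    fun h11 h12 h13 h14 h51 h361 h362 => ?_⟩
  obtain ⟨hlow, hv3, hv5, hv7⟩ := coeff_five_liapunov_constants h40 h50 h51 h36 h361 h362
  refine ⟨fun j hj1 hj4 => ⟨?_, hlow j (by omega)⟩, rfl, hv3, hv5, hv7⟩
  interval_cases j <;> assumption

/-- Hamiltonian Lotka–Volterra case, orders 4 and 5. -/
theorem hamiltonian_lotka_volterra_high_order
    (l1 l2 l3 l4 l5 l6 : PowerSeries ℝ)
    (v1 v3 v5 v7 : PowerSeries ℝ)
    (hv1 : v1 = l1)
    (hv3 : v3 = l5 * (l3 - l6))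
    (hv5 : v5 = l2 * l4 * (l3 - l6) * (l4 + 5 * l3 - 5 * l6))
    (hv7 : v7 = l2 * l4 * (l3 - l6) ^ 2 * (l3 * l6 - 2 * l6 ^ 2 - l2 ^ 2))
    (h10 : coeff 0 l1 = 0)
    (h40 : coeff 0 l4 = 0)
    (h50 : coeff 0 l5 = 0)
    (h36 : coeff 0 l3 = coeff 0 l6)
    (h20 : coeff 0 l2 ≠ 0) :
    (coeff 1 l3 ≠ coeff 1 l6 → coeff 1 l1 = 0 → coeff 2 l1 = 0 → coeff 3 l1 = 0 →
      coeff 1 l5 = 0 → coeff 2 l5 = 0 → coeff 1 l4 = 0 →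
      coeff 4 v1 = coeff 4 l1 ∧
      coeff 4 v3 = (coeff 1 l3 - coeff 1 l6) * coeff 3 l5 ∧
      coeff 4 v5 = 5 * coeff 0 l2 * (coeff 1 l3 - coeff 1 l6) ^ 2 * coeff 2 l4 ∧
      coeff 4 v7 = -(coeff 0 l2 * ((coeff 0 l6) ^ 2 + (coeff 0 l2) ^ 2)
        * (coeff 1 l3 - coeff 1 l6) ^ 2 * coeff 2 l4)) ∧
    (coeff 1 l1 = 0 → coeff 2 l1 = 0 → coeff 3 l1 = 0 → coeff 4 l1 = 0 →
      coeff 1 l5 = 0 → coeff 1 l3 = coeff 1 l6 → coeff 2 l3 = coeff 2 l6 →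
      (∀ j : ℕ, 1 ≤ j → j ≤ 4 →
        coeff j v1 = 0 ∧ coeff j v3 = 0 ∧ coeff j v5 = 0 ∧ coeff j v7 = 0) ∧
      coeff 5 v1 = coeff 5 l1 ∧
      coeff 5 v3 = (coeff 3 l3 - coeff 3 l6) * coeff 2 l5 ∧
      coeff 5 v5 = coeff 0 l2 * (coeff 1 l4) ^ 2 * (coeff 3 l3 - coeff 3 l6) ∧
      coeff 5 v7 = 0) :=
  hamiltonian_lotka_volterra_high_order_general l1 l2 l3 l4 l5 l6 v1 v3 v5 v7 hv1 hv3 hv5 hv7 h40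
    h50 h36
end

section
/- (Hamiltonian triangle case.) Assume λ_{1,0} = λ_{2,0} = λ_{4,0} = λ_{5,0} = 0, λ_{3,0} = λ_{6,0} and λ_{6,0} ≠ 0. Then v̄_{3,1} = v̄_{5,1} = v̄_{7,1} = 0, v̄_{3,2} = (λ_{3,1} − λ_{6,1}) λ_{5,1}, v̄_{5,2} = v̄_{7,2} = 0, and v̄_{5,3} = v̄_{7,3} = 0. (a) If λ_{3,1} ≠ λ_{6,1}, λ_{1,1} = λ_{1,2} = λ_{1,3} = 0 and λ_{5,1} = λ_{5,2} = 0, then v̄_{1,4} = λ_{1,4}, v̄_{3,4} = (λ_{3,1} − λ_{6,1}) λ_{5,3}, v̄_{5,4} = λ_{2,1} λ_{4,1}(λ_{3,1} − λ_{6,1})(λ_{4,1}+5λ_{3,1}−5λ_{6,1}), and v̄_{7,4} = −λ_{6,0}² λ_{2,1} λ_{4,1}(λ_{3,1} − λ_{6,1})². (b) If instead λ_{3,1} = λ_{6,1}, λ_{5,1} = λ_{5,2} = 0 and λ_{1,j} = 0 for 1 ≤ j ≤ 4, then v̄_{1,j} = v̄_{3,j} = v̄_{5,j} = v̄_{7,j}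 = 0 for all 1 ≤ j ≤ 4, and v̄_{1,5} = λ_{1,5}, v̄_{3,5} = (λ_{3,2} − λ_{6,2}) λ_{5,3}, v̄_{5,5} = λ_{2,1} λ_{4,1}² (λ_{3,2} − λ_{6,2}), v̄_{7,5} = 0. -/
/-!
Write `HasLeadingTerm φ n a` for `φ = a ε^n + O(ε^(n+1))`; such leading terms multiply.
By hypothesis `λ₂`, `λ₄`, `λ₅`, `λ₃ - λ₆` and `λ₄ + 5λ₃ - 5λ₆` all vanish at `ε = 0`, so each has a
leading term of order one, while the last factor of `v₇` starts with `-λ_{6,0}²`. Multiplying out,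
`v₃` has a leading term of order 2 and `v₅`, `v₇` of order 4. In case (a) `λ₅ = O(ε³)`, which
raises the order of `v₃` to 4; in case (b) also `λ₃ - λ₆ = O(ε²)`, which raises the orders of `v₃`
and `v₅` to 5 and that of `v₇` to 6.
-/

open PowerSeries

namespace PowerSeries

variable {R : Type*} [CommRing R] {φ ψ : R⟦X⟧} {m n : ℕ} {a b : R}

theorem coeff_X_pow_mul_self (φ : R⟦X⟧) (n : ℕ) : coeff n (X ^ n * φ) = constantCoeff φ := by
  simpa using coeff_X_pow_mul φ n 0

/-- `φ = a X^n + O(X^(n+1))`; the coefficient `a` may vanish. -/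
def HasLeadingTerm (φ : R⟦X⟧) (n : ℕ) (a : R) : Prop :=
  X ^ n ∣ φ ∧ coeff n φ = a

namespace HasLeadingTerm

theorem of_coeff_lt (h : ∀ m < n, coeff m φ = 0) : HasLeadingTerm φ n (coeff n φ) :=
  ⟨X_pow_dvd_iff.mpr h, rfl⟩

theorem sub_of_coeff_lt (h : ∀ m < n, coeff m φ = coeff m ψ) :
    HasLeadingTerm (φ - ψ) n (coeff n φ - coeff n ψ) :=
  map_sub (coeff n) φ ψ ▸ of_coeff_lt fun m hm ↦ by rw [map_sub, h m hm, sub_self]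

theorem coeff_of_lt (h : HasLeadingTerm φ n a) (hm : m < n) : coeff m φ = 0 :=
  X_pow_dvd_iff.mp h.1 m hm

theorem mul (hφ : HasLeadingTerm φ m a) (hψ : HasLeadingTerm ψ n b) :
    HasLeadingTerm (φ * ψ) (m + n) (a * b) := by
  obtain ⟨⟨φ', rfl⟩, rfl⟩ := hφ
  obtain ⟨⟨ψ', rfl⟩, rfl⟩ := hψ
  refine ⟨pow_add (X : R⟦X⟧) m n ▸ mul_dvd_mul (dvd_mul_right _ _) (dvd_mul_right _ _), ?_⟩
  rw [show X ^ m * φ' * (X ^ n * ψ') = X ^ (m + n) * (φ' * ψ') by ring]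
  simp only [coeff_X_pow_mul_self, map_mul]

theorem pow (h : HasLeadingTerm φ m a) (k : ℕ) : HasLeadingTerm (φ ^ k) (m * k) (a ^ k) := by
  induction k with
  | zero => simp [HasLeadingTerm]
  | succ k ih => simpa [pow_succ, mul_add] using ih.mul h

end HasLeadingTerm

theorem hasLeadingTerm_add_five_mul_sub_five_mul {l3 l4 l6 : R⟦X⟧} (h40 : coeff 0 l4 = 0)
    (h36 : coeff 0 l3 = coeff 0 l6) :
    HasLeadingTerm (l4 + 5 * l3 - 5 * l6) 1 (coeff 1 l4 + 5 * coeff 1 l3 - 5 * coeff 1 l6) := by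
  have hcoeff (n : ℕ) : coeff n (l4 + 5 * l3 - 5 * l6) =
      coeff n l4 + 5 * coeff n l3 - 5 * coeff n l6 := by
    rw [← map_ofNat C 5]
    simp only [map_sub, map_add, coeff_C_mul]
  rw [← hcoeff]
  exact .of_coeff_lt fun m hm ↦ by simp [Nat.lt_one_iff.mp hm, hcoeff, h40, h36]

theorem hasLeadingTerm_mul_sub_two_mul_sq_sub_sq {l2 l3 l6 : R⟦X⟧} (h20 : coeff 0 l2 = 0)
    (h36 : coeff 0 l3 = coeff 0 l6) :
    HasLeadingTerm (l3 * l6 - 2 * l6 ^ 2 - l2 ^ 2) 0 (-coeff 0 l6 ^ 2) := by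
  refine ⟨one_dvd _, ?_⟩
  simp only [coeff_zero_eq_constantCoeff_apply] at h20 h36 ⊢
  simp only [map_sub, map_mul, map_pow, map_ofNat, h20, h36]
  ring

end PowerSeries

theorem hamiltonian_triangle_general
    (l1 l2 l3 l4 l5 l6 : PowerSeries ℝ)
    (v1 v3 v5 v7 : PowerSeries ℝ)
    (hv1 : v1 = l1)
    (hv3 : v3 = l5 * (l3 - l6))
    (hv5 : v5 = l2 * l4 * (l3 - l6) * (l4 + 5 * l3 - 5 * l6))
    (hv7 : v7 = l2 * l4 * (l3 - l6) ^ 2 * (l3 * l6 - 2 * l6 ^ 2 - l2 ^ 2))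
    (h20 : coeff 0 l2 = 0)
    (h40 : coeff 0 l4 = 0)
    (h50 : coeff 0 l5 = 0)
    (h36 : coeff 0 l3 = coeff 0 l6) :
    coeff 1 v3 = 0 ∧ coeff 1 v5 = 0 ∧ coeff 1 v7 = 0 ∧
    coeff 2 v3 = (coeff 1 l3 - coeff 1 l6) * coeff 1 l5 ∧
    coeff 2 v5 = 0 ∧ coeff 2 v7 = 0 ∧
    coeff 3 v5 = 0 ∧ coeff 3 v7 = 0 ∧
    (coeff 1 l3 ≠ coeff 1 l6 → coeff 1 l1 = 0 → coeff 2 l1 = 0 → coeff 3 l1 = 0 →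
      coeff 1 l5 = 0 → coeff 2 l5 = 0 →
      coeff 4 v1 = coeff 4 l1 ∧
      coeff 4 v3 = (coeff 1 l3 - coeff 1 l6) * coeff 3 l5 ∧
      coeff 4 v5 = coeff 1 l2 * coeff 1 l4 * (coeff 1 l3 - coeff 1 l6)
        * (coeff 1 l4 + 5 * coeff 1 l3 - 5 * coeff 1 l6) ∧
      coeff 4 v7 = -((coeff 0 l6) ^ 2 * coeff 1 l2 * coeff 1 l4 * (coeff 1 l3 - coeff 1 l6) ^ 2)) ∧
    (coeff 1 l3 = coeff 1 l6 → coeff 1 l5 = 0 → coeff 2 l5 = 0 →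
      (∀ j : ℕ, 1 ≤ j → j ≤ 4 → coeff j l1 = 0) →
      (∀ j : ℕ, 1 ≤ j → j ≤ 4 →
        coeff j v1 = 0 ∧ coeff j v3 = 0 ∧ coeff j v5 = 0 ∧ coeff j v7 = 0) ∧
      coeff 5 v1 = coeff 5 l1 ∧
      coeff 5 v3 = (coeff 2 l3 - coeff 2 l6) * coeff 3 l5 ∧
      coeff 5 v5 = coeff 1 l2 * (coeff 1 l4) ^ 2 * (coeff 2 l3 - coeff 2 l6) ∧
      coeff 5 v7 = 0) := by
  subst hv1 hv3 hv5 hv7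
  have h2 : HasLeadingTerm l2 1 (coeff 1 l2) := .of_coeff_lt (by simpa using h20)
  have h4 : HasLeadingTerm l4 1 (coeff 1 l4) := .of_coeff_lt (by simpa using h40)
  have h5 : HasLeadingTerm l5 1 (coeff 1 l5) := .of_coeff_lt (by simpa using h50)
  have h5₃ (h51 : coeff 1 l5 = 0) (h52 : coeff 2 l5 = 0) : HasLeadingTerm l5 3 (coeff 3 l5) :=
    .of_coeff_lt fun m hm ↦ by interval_cases m <;> assumption
  have hd : HasLeadingTerm (l3 - l6) 1 _ := .sub_of_coeff_lt (by simpa using h36)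
  have hw := hasLeadingTerm_add_five_mul_sub_five_mul h40 h36
  have hq := hasLeadingTerm_mul_sub_two_mul_sq_sub_sq h20 h36
  have hv3 := h5.mul hd
  have hv5 := ((h2.mul h4).mul hd).mul hw
  have hv7 := ((h2.mul h4).mul (hd.pow 2)).mul hq
  refine ⟨hv3.coeff_of_lt (by norm_num), hv5.coeff_of_lt (by norm_num),
    hv7.coeff_of_lt (by norm_num), by rw [hv3.2]; ring, hv5.coeff_of_lt (by norm_num),
    hv7.coeff_of_lt (by norm_num), hv5.coeff_of_lt (by norm_num), hv7.coeff_of_lt (by norm_num),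
    fun _ _ _ _ h51 h52 ↦ ⟨rfl, by rw [((h5₃ h51 h52).mul hd).2]; ring, hv5.2, by rw [hv7.2]; ring⟩,
    fun h31 h51 h52 h1 ↦ ?_⟩
  have hd₂ : HasLeadingTerm (l3 - l6) 2 _ :=
    .sub_of_coeff_lt fun m hm ↦ by interval_cases m <;> assumption
  have hw₂ : HasLeadingTerm (l4 + 5 * l3 - 5 * l6) 1 (coeff 1 l4) := ⟨hw.1, by rw [hw.2, h31]; ring⟩
  have hv3 := (h5₃ h51 h52).mul hd₂
  have hv5 := ((h2.mul h4).mul hd₂).mul hw₂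
  have hv7 := ((h2.mul h4).mul (hd₂.pow 2)).mul hq
  exact ⟨fun j hj1 hj4 ↦ ⟨h1 j hj1 hj4, hv3.coeff_of_lt (by omega), hv5.coeff_of_lt (by omega),
    hv7.coeff_of_lt (by omega)⟩, rfl, by rw [hv3.2]; ring, by rw [hv5.2]; ring,
    hv7.coeff_of_lt (by norm_num)⟩

/-- Hamiltonian triangle case. -/
theorem hamiltonian_triangle
    (l1 l2 l3 l4 l5 l6 : PowerSeries ℝ)
    (v1 v3 v5 v7 : PowerSeries ℝ)
    (hv1 : v1 = l1)
    (hv3 : v3 = l5 * (l3 - l6))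
    (hv5 : v5 = l2 * l4 * (l3 - l6) * (l4 + 5 * l3 - 5 * l6))
    (hv7 : v7 = l2 * l4 * (l3 - l6) ^ 2 * (l3 * l6 - 2 * l6 ^ 2 - l2 ^ 2))
    (h10 : coeff 0 l1 = 0)
    (h20 : coeff 0 l2 = 0)
    (h40 : coeff 0 l4 = 0)
    (h50 : coeff 0 l5 = 0)
    (h36 : coeff 0 l3 = coeff 0 l6)
    (h60 : coeff 0 l6 ≠ 0) :
    coeff 1 v3 = 0 ∧ coeff 1 v5 = 0 ∧ coeff 1 v7 = 0 ∧
    coeff 2 v3 = (coeff 1 l3 - coeff 1 l6) * coeff 1 l5 ∧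
    coeff 2 v5 = 0 ∧ coeff 2 v7 = 0 ∧
    coeff 3 v5 = 0 ∧ coeff 3 v7 = 0 ∧
    (coeff 1 l3 ≠ coeff 1 l6 → coeff 1 l1 = 0 → coeff 2 l1 = 0 → coeff 3 l1 = 0 →
      coeff 1 l5 = 0 → coeff 2 l5 = 0 →
      coeff 4 v1 = coeff 4 l1 ∧
      coeff 4 v3 = (coeff 1 l3 - coeff 1 l6) * coeff 3 l5 ∧
      coeff 4 v5 = coeff 1 l2 * coeff 1 l4 * (coeff 1 l3 - coeff 1 l6)
        * (coeff 1 l4 + 5 * coeff 1 l3 - 5 * coeff 1 l6) ∧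
      coeff 4 v7 = -((coeff 0 l6) ^ 2 * coeff 1 l2 * coeff 1 l4 * (coeff 1 l3 - coeff 1 l6) ^ 2)) ∧
    (coeff 1 l3 = coeff 1 l6 → coeff 1 l5 = 0 → coeff 2 l5 = 0 →
      (∀ j : ℕ, 1 ≤ j → j ≤ 4 → coeff j l1 = 0) →
      (∀ j : ℕ, 1 ≤ j → j ≤ 4 →
        coeff j v1 = 0 ∧ coeff j v3 = 0 ∧ coeff j v5 = 0 ∧ coeff j v7 = 0) ∧
      coeff 5 v1 = coeff 5 l1 ∧
      coeff 5 v3 = (coeff 2 l3 - coeff 2 l6) * coeff 3 l5 ∧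
      coeff 5 v5 = coeff 1 l2 * (coeff 1 l4) ^ 2 * (coeff 2 l3 - coeff 2 l6) ∧
      coeff 5 v7 = 0) :=
  hamiltonian_triangle_general l1 l2 l3 l4 l5 l6 v1 v3 v5 v7 hv1 hv3 hv5 hv7 h20 h40 h50 h36
end

section
/- (Cubic generic Hamiltonian case, first subcase.) Assume λ₀ = a₀ = ξ₀ = 0, ν₀² + θ₀² ≠ 0 and ν₀² + ω₀² ≠ 0. Let k ≥ 1 be an integer and suppose v̄_{1,j} = v̄_{3,j} = v̄_{5,j} = v̄_{7,j} = 0 for all 0 ≤ j ≤ k−1. Then v̄_{1,k} = λ_k, v̄_{3,k} = ξ_k, v̄_{5,k} = ν₀ a_k, v̄_{7,k} = ω₀ θ₀ a_k, and v̄_{9,k} = v̄_{11,k} = 0. -/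
/-! Genericity makes `ν₀` or `ω₀ θ₀` nonzero, so the vanishing of the low coefficients of
`v₅ = ν a` and `v₇ = ω θ a` forces `X ^ k ∣ a`, one coefficient at a time. Then the `k`-th
coefficients of `v₅, v₇` only see the constant terms of the cofactors, while `v₉` and `v₁₁` are
multiples of `a ^ 2`, which is divisible by `X ^ (2 * k)` with `2 * k > k`. -/

open PowerSeries

namespace PowerSeries

variable {R : Type*}

theorem coeff_mul_of_X_pow_dvd_s13 [Semiring R] {a : R⟦X⟧} {n : ℕ} (ha : X ^ n ∣ a) (b : R⟦X⟧) :
    coeff n (b * a) = coeff 0 b * coeff n a := by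
  obtain ⟨c, rfl⟩ := ha
  have hcoeff : ∀ d : R⟦X⟧, coeff n (X ^ n * d) = coeff 0 d := fun d => by
    simpa using coeff_X_pow_mul d n 0
  rw [(commute_X_pow b n).left_comm, hcoeff, hcoeff]
  simp only [coeff_zero_eq_constantCoeff_apply, map_mul]

theorem X_pow_dvd_of_coeff_mul_eq_zero [Semiring R] [NoZeroDivisors R] {a b c : R⟦X⟧}
    (hbc : coeff 0 b ≠ 0 ∨ coeff 0 c ≠ 0) :
    ∀ {k : ℕ}, (∀ j < k, coeff j (b * a) = 0 ∧ coeff j (c * a) = 0) → X ^ k ∣ a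
  | 0, _ => by simp
  | k + 1, h => by
    have hk : X ^ k ∣ a := X_pow_dvd_of_coeff_mul_eq_zero hbc fun j hj => h j (by omega)
    obtain ⟨hb, hc⟩ := h k k.lt_succ_self
    rw [coeff_mul_of_X_pow_dvd_s13 hk] at hb hc
    have hak : coeff k a = 0 := by
      rcases hbc with hb0 | hc0
      · exact (mul_eq_zero.mp hb).resolve_left hb0
      · exact (mul_eq_zero.mp hc).resolve_left hc0
    refine X_pow_dvd_iff.mpr fun m hm => ?_
    rcases Nat.lt_succ_iff_lt_or_eq.mp hm with hm | rfl
    · exact X_pow_dvd_iff.mp hk m hm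
    · exact hak

theorem coeff_mul_sq_eq_zero_of_X_pow_dvd [CommSemiring R] {a : R⟦X⟧} {k : ℕ} (ha : X ^ k ∣ a)
    (hk : 1 ≤ k) (b : R⟦X⟧) : coeff k (b * a ^ 2) = 0 := by
  have hsq : X ^ (k + 1) ∣ b * a ^ 2 := by
    refine (pow_dvd_pow X (by omega : k + 1 ≤ k * 2)).trans (Dvd.dvd.mul_left ?_ b)
    rw [pow_mul]
    exact pow_dvd_pow_of_dvd ha 2
  exact X_pow_dvd_iff.mp hsq k k.lt_succ_self

end PowerSeries

theorem cubic_generic_hamiltonian_case1_general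
    (lam w th a e m xi nu : PowerSeries ℝ)
    (v1 v3 v5 v7 v9 v11 : PowerSeries ℝ)
    (hv1 : v1 = lam)
    (hv3 : v3 = xi)
    (hv5 : v5 = nu * a)
    (hv7 : v7 = w * th * a)
    (hv9 : v9 = th * a ^ 2 * e)
    (hv11 : v11 = th * (4 * (m ^ 2 + th ^ 2) - a ^ 2) * a ^ 2)
    (hgen1 : (coeff 0 nu) ^ 2 + (coeff 0 th) ^ 2 ≠ 0)
    (hgen2 : (coeff 0 nu) ^ 2 + (coeff 0 w) ^ 2 ≠ 0)
    (k : ℕ) (hk : 1 ≤ k)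
    (hvan : ∀ j < k, coeff j v1 = 0 ∧ coeff j v3 = 0 ∧ coeff j v5 = 0 ∧ coeff j v7 = 0) :
    coeff k v1 = coeff k lam ∧
    coeff k v3 = coeff k xi ∧
    coeff k v5 = coeff 0 nu * coeff k a ∧
    coeff k v7 = coeff 0 w * coeff 0 th * coeff k a ∧
    coeff k v9 = 0 ∧ coeff k v11 = 0 := by
  subst hv1 hv3 hv5 hv7 hv9 hv11
  have hwth : coeff 0 (w * th) = coeff 0 w * coeff 0 th := by
    simp only [coeff_zero_eq_constantCoeff_apply, map_mul]
  have hgen : coeff 0 nu ≠ 0 ∨ coeff 0 (w * th) ≠ 0 := by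
    rw [hwth]
    by_contra! h
    rcases mul_eq_zero.mp h.2 with hw | hth
    · exact hgen2 (by simp [h.1, hw])
    · exact hgen1 (by simp [h.1, hth])
  have ha : X ^ k ∣ a :=
    X_pow_dvd_of_coeff_mul_eq_zero hgen fun j hj => ⟨(hvan j hj).2.2.1, (hvan j hj).2.2.2⟩
  refine ⟨rfl, rfl, coeff_mul_of_X_pow_dvd_s13 ha nu, ?_, ?_,
    coeff_mul_sq_eq_zero_of_X_pow_dvd ha hk _⟩
  · rw [coeff_mul_of_X_pow_dvd_s13 ha, hwth]
  · rw [mul_right_comm]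
    exact coeff_mul_sq_eq_zero_of_X_pow_dvd ha hk _

/-- Cubic generic Hamiltonian case, first subcase. -/
theorem cubic_generic_hamiltonian_case1
    (lam w th a e m xi nu : PowerSeries ℝ)
    (v1 v3 v5 v7 v9 v11 : PowerSeries ℝ)
    (hv1 : v1 = lam)
    (hv3 : v3 = xi)
    (hv5 : v5 = nu * a)
    (hv7 : v7 = w * th * a)
    (hv9 : v9 = th * a ^ 2 * e)
    (hv11 : v11 = th * (4 * (m ^ 2 + th ^ 2) - a ^ 2) * a ^ 2)
    (hlam0 : coeff 0 lam = 0)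
    (ha0 : coeff 0 a = 0)
    (hxi0 : coeff 0 xi = 0)
    (hgen1 : (coeff 0 nu) ^ 2 + (coeff 0 th) ^ 2 ≠ 0)
    (hgen2 : (coeff 0 nu) ^ 2 + (coeff 0 w) ^ 2 ≠ 0)
    (k : ℕ) (hk : 1 ≤ k)
    (hvan : ∀ j < k, coeff j v1 = 0 ∧ coeff j v3 = 0 ∧ coeff j v5 = 0 ∧ coeff j v7 = 0) :
    coeff k v1 = coeff k lam ∧
    coeff k v3 = coeff k xi ∧
    coeff k v5 = coeff 0 nu * coeff k a ∧
    coeff k v7 = coeff 0 w * coeff 0 th * coeff k a ∧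
    coeff k v9 = 0 ∧ coeff k v11 = 0 :=
  cubic_generic_hamiltonian_case1_general lam w th a e m xi nu v1 v3 v5 v7 v9 v11 hv1 hv3 hv5 hv7
    hv9 hv11 hgen1 hgen2 k hk hvan
end

section
/- (Cubic generic symmetric case.) Assume λ₀ = ξ₀ = ν₀ = θ₀ = 0, a₀ ≠ 0, and ω₀² + η₀² + (4μ₀² − a₀²)² ≠ 0. Let k ≥ 1 be an integer and suppose v̄_{1,j} = v̄_{3,j} = v̄_{5,j} = v̄_{7,j} = v̄_{9,j} = v̄_{11,j} = 0 for all 0 ≤ j ≤ k−1. Then v̄_{1,k} = λ_k, v̄_{3,k} = ξ_k, v̄_{5,k} = a₀ ν_k, v̄_{7,k} = a₀ ω₀ θ_k, v̄_{9,k} = a₀² η₀ θ_k, and v̄_{11,k} = a₀²(4μ₀² − a₀²) θ_k. -/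
open PowerSeries

/-
Write every `v` as a product `f * g` whose first factor is `ν` or `θ` and whose second factor
has an invertible constant coefficient (for `v₇`, `v₉`, `v₁₁`: at least one of them does, by
the genericity condition and `a₀ ≠ 0`). Divisibility by `X ^ k` passes from `f * g` to `f` when
`g` is a unit, so the vanishing of the `v`'s below order `k` forces `ν` and `θ` to vanish below
order `k`, and then the order-`k` coefficient of `f * g` is just `f_k g₀`.
-/

section

variable {R : Type*} [CommRing R] {k : ℕ} {f g : R⟦X⟧}

theorem PowerSeries.coeff_mul_of_X_pow_dvd_s15 (hf : X ^ k ∣ f) :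
    coeff k (f * g) = coeff k f * coeff 0 g := by
  obtain ⟨q, rfl⟩ := hf
  simp [mul_assoc, coeff_X_pow_mul', coeff_zero_eq_constantCoeff_apply]

theorem PowerSeries.X_pow_dvd_of_dvd_mul_of_isUnit (h : X ^ k ∣ f * g)
    (hg : IsUnit (coeff 0 g)) : X ^ k ∣ f := by
  rw [coeff_zero_eq_constantCoeff_apply, ← isUnit_iff_constantCoeff] at hg
  exact hg.dvd_mul_right.mp h

end

theorem cubic_generic_symmetric_general
    (lam w th a e m xi nu : PowerSeries ℝ)
    (v1 v3 v5 v7 v9 v11 : PowerSeries ℝ)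
    (hv1 : v1 = lam)
    (hv3 : v3 = xi)
    (hv5 : v5 = nu * a)
    (hv7 : v7 = w * th * a)
    (hv9 : v9 = th * a ^ 2 * e)
    (hv11 : v11 = th * (4 * (m ^ 2 + th ^ 2) - a ^ 2) * a ^ 2)
    (hth0 : coeff 0 th = 0)
    (ha0 : coeff 0 a ≠ 0)
    (hgen : (coeff 0 w) ^ 2 + (coeff 0 e) ^ 2 + (4 * (coeff 0 m) ^ 2 - (coeff 0 a) ^ 2) ^ 2 ≠ 0)
    (k : ℕ)
    (hvan : ∀ j < k, coeff j v1 = 0 ∧ coeff j v3 = 0 ∧ coeff j v5 = 0 ∧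
      coeff j v7 = 0 ∧ coeff j v9 = 0 ∧ coeff j v11 = 0) :
    coeff k v1 = coeff k lam ∧
    coeff k v3 = coeff k xi ∧
    coeff k v5 = coeff 0 a * coeff k nu ∧
    coeff k v7 = coeff 0 a * coeff 0 w * coeff k th ∧
    coeff k v9 = (coeff 0 a) ^ 2 * coeff 0 e * coeff k th ∧
    coeff k v11 = (coeff 0 a) ^ 2 * (4 * (coeff 0 m) ^ 2 - (coeff 0 a) ^ 2) * coeff k th := by
  rw [mul_comm w, mul_assoc] at hv7
  rw [mul_assoc] at hv9 hv11
  subst hv1 hv3 hv5 hv7 hv9 hv11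
  simp only [imp_and, forall_and, ← X_pow_dvd_iff] at hvan
  obtain ⟨-, -, h5, h7, h9, h11⟩ := hvan
  have c7 : coeff 0 (w * a) = coeff 0 w * coeff 0 a := by
    simp only [coeff_zero_eq_constantCoeff_apply, map_mul]
  have c9 : coeff 0 (a ^ 2 * e) = coeff 0 a ^ 2 * coeff 0 e := by
    simp only [coeff_zero_eq_constantCoeff_apply, map_mul, map_pow]
  have c11 : coeff 0 ((4 * (m ^ 2 + th ^ 2) - a ^ 2) * a ^ 2) =
      (4 * coeff 0 m ^ 2 - coeff 0 a ^ 2) * coeff 0 a ^ 2 := by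
    simp only [coeff_zero_eq_constantCoeff_apply] at hth0 ⊢
    simp [hth0, map_ofNat]
  have hnu : X ^ k ∣ nu := X_pow_dvd_of_dvd_mul_of_isUnit h5 ha0.isUnit
  have hgen' : coeff 0 w ≠ 0 ∨ coeff 0 e ≠ 0 ∨ 4 * coeff 0 m ^ 2 - coeff 0 a ^ 2 ≠ 0 := by
    by_contra! h
    exact hgen (by rw [h.1, h.2.1, h.2.2]; ring)
  have hth : X ^ k ∣ th := by
    rcases hgen' with hw | he | hm
    · exact X_pow_dvd_of_dvd_mul_of_isUnit h7 (c7 ▸ (mul_ne_zero hw ha0).isUnit)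
    · exact X_pow_dvd_of_dvd_mul_of_isUnit h9 (c9 ▸ (mul_ne_zero (pow_ne_zero 2 ha0) he).isUnit)
    · exact X_pow_dvd_of_dvd_mul_of_isUnit h11
        (c11 ▸ (mul_ne_zero hm (pow_ne_zero 2 ha0)).isUnit)
  refine ⟨rfl, rfl, ?_, ?_, ?_, ?_⟩
  · rw [coeff_mul_of_X_pow_dvd_s15 hnu, mul_comm]
  · rw [coeff_mul_of_X_pow_dvd_s15 hth, c7]; ring
  · rw [coeff_mul_of_X_pow_dvd_s15 hth, c9]; ring
  · rw [coeff_mul_of_X_pow_dvd_s15 hth, c11]; ring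

/-- Cubic generic symmetric case. -/
theorem cubic_generic_symmetric
    (lam w th a e m xi nu : PowerSeries ℝ)
    (v1 v3 v5 v7 v9 v11 : PowerSeries ℝ)
    (hv1 : v1 = lam)
    (hv3 : v3 = xi)
    (hv5 : v5 = nu * a)
    (hv7 : v7 = w * th * a)
    (hv9 : v9 = th * a ^ 2 * e)
    (hv11 : v11 = th * (4 * (m ^ 2 + th ^ 2) - a ^ 2) * a ^ 2)
    (hlam0 : coeff 0 lam = 0)
    (hxi0 : coeff 0 xi = 0)
    (hnu0 : coeff 0 nu = 0)
    (hth0 : coeff 0 th = 0)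
    (ha0 : coeff 0 a ≠ 0)
    (hgen : (coeff 0 w) ^ 2 + (coeff 0 e) ^ 2 + (4 * (coeff 0 m) ^ 2 - (coeff 0 a) ^ 2) ^ 2 ≠ 0)
    (k : ℕ) (hk : 1 ≤ k)
    (hvan : ∀ j < k, coeff j v1 = 0 ∧ coeff j v3 = 0 ∧ coeff j v5 = 0 ∧
      coeff j v7 = 0 ∧ coeff j v9 = 0 ∧ coeff j v11 = 0) :
    coeff k v1 = coeff k lam ∧
    coeff k v3 = coeff k xi ∧
    coeff k v5 = coeff 0 a * coeff k nu ∧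
    coeff k v7 = coeff 0 a * coeff 0 w * coeff k th ∧
    coeff k v9 = (coeff 0 a) ^ 2 * coeff 0 e * coeff k th ∧
    coeff k v11 = (coeff 0 a) ^ 2 * (4 * (coeff 0 m) ^ 2 - (coeff 0 a) ^ 2) * coeff k th :=
  cubic_generic_symmetric_general lam w th a e m xi nu v1 v3 v5 v7 v9 v11 hv1 hv3 hv5 hv7 hv9 hv11
    hth0 ha0 hgen k hvan
end

section
/- (Cubic generic Darboux case.) Assume λ₀ = ξ₀ = ν₀ = ω₀ = η₀ = 0, 4(μ₀² + θ₀²) − a₀² = 0, a₀ ≠ 0 and θ₀ ≠ 0. Then v̄_{1,1} = λ₁, v̄_{3,1} = ξ₁, v̄_{5,1} = a₀ ν₁, v̄_{7,1} = a₀ θ₀ ω₁, v̄_{9,1} = a₀² θ₀ η₁, and v̄_{11,1} = 2 a₀² θ₀ (4μ₀μ₁ + 4θ₀θ₁ − a₀a₁). -/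
/-! Taking the coefficient of `ε` obeys the Leibniz rule, so in a product with a factor that
vanishes at `ε = 0` only the term differentiating that factor survives. For `v₁₁` that factor is
`4 (μ² + θ²) - a²`, whose first-order coefficient is again computed by the Leibniz rule. -/

namespace PowerSeries

variable {R : Type*}

section CommSemiring

variable [CommSemiring R]

theorem coeff_ofNat_mul_s16 (n k : ℕ) [n.AtLeastTwo] (φ : R⟦X⟧) :
    coeff k (ofNat(n) * φ) = ofNat(n) * coeff k φ := by
  rw [← map_ofNat C n, coeff_C_mul]

theorem coeff_one_mul_of_constantCoeff_left_eq_zero {φ ψ : R⟦X⟧} (hφ : constantCoeff φ = 0) :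
    coeff 1 (φ * ψ) = coeff 1 φ * constantCoeff ψ := by
  simp [coeff_one_mul, hφ]

theorem coeff_one_mul_of_constantCoeff_right_eq_zero {φ ψ : R⟦X⟧} (hψ : constantCoeff ψ = 0) :
    coeff 1 (φ * ψ) = constantCoeff φ * coeff 1 ψ := by
  rw [mul_comm, coeff_one_mul_of_constantCoeff_left_eq_zero hψ, mul_comm]

end CommSemiring

theorem coeff_one_four_mul_sq_add_sq_sub_sq [CommRing R] (m θ a : R⟦X⟧) :
    coeff 1 (4 * (m ^ 2 + θ ^ 2) - a ^ 2) = 2 * (4 * constantCoeff m * coeff 1 m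
      + 4 * constantCoeff θ * coeff 1 θ - constantCoeff a * coeff 1 a) := by
  simp only [map_sub, coeff_ofNat_mul_s16, map_add, coeff_one_pow]
  push_cast
  ring

end PowerSeries

open PowerSeries

theorem cubic_generic_darboux_general
    (lam w th a e m xi nu : PowerSeries ℝ)
    (v1 v3 v5 v7 v9 v11 : PowerSeries ℝ)
    (hv1 : v1 = lam)
    (hv3 : v3 = xi)
    (hv5 : v5 = nu * a)
    (hv7 : v7 = w * th * a)
    (hv9 : v9 = th * a ^ 2 * e)
    (hv11 : v11 = th * (4 * (m ^ 2 + th ^ 2) - a ^ 2) * a ^ 2)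
    (hnu0 : coeff 0 nu = 0)
    (hw0 : coeff 0 w = 0)
    (he0 : coeff 0 e = 0)
    (hD : 4 * ((coeff 0 m) ^ 2 + (coeff 0 th) ^ 2) - (coeff 0 a) ^ 2 = 0) :
    coeff 1 v1 = coeff 1 lam ∧
    coeff 1 v3 = coeff 1 xi ∧
    coeff 1 v5 = coeff 0 a * coeff 1 nu ∧
    coeff 1 v7 = coeff 0 a * coeff 0 th * coeff 1 w ∧
    coeff 1 v9 = (coeff 0 a) ^ 2 * coeff 0 th * coeff 1 e ∧
    coeff 1 v11 = 2 * (coeff 0 a) ^ 2 * coeff 0 th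
      * (4 * coeff 0 m * coeff 1 m + 4 * coeff 0 th * coeff 1 th - coeff 0 a * coeff 1 a) := by
  subst_vars
  simp only [coeff_zero_eq_constantCoeff_apply] at hnu0 hw0 he0 hD
  have hfactor0 : constantCoeff (4 * (m ^ 2 + th ^ 2) - a ^ 2) = 0 := by simpa [map_ofNat] using hD
  refine ⟨rfl, rfl, ?_, ?_, ?_, ?_⟩ <;> simp only [coeff_zero_eq_constantCoeff_apply]
  · rw [coeff_one_mul_of_constantCoeff_left_eq_zero hnu0, mul_comm]
  · rw [coeff_one_mul_of_constantCoeff_left_eq_zero (by simp [hw0]),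
      coeff_one_mul_of_constantCoeff_left_eq_zero hw0]
    ring
  · rw [coeff_one_mul_of_constantCoeff_right_eq_zero he0, map_mul, map_pow]
    ring
  · rw [coeff_one_mul_of_constantCoeff_left_eq_zero (by simp [hfactor0]),
      coeff_one_mul_of_constantCoeff_right_eq_zero hfactor0, coeff_one_four_mul_sq_add_sq_sub_sq,
      map_pow]
    ring

/-- Cubic generic Darboux case. -/
theorem cubic_generic_darboux
    (lam w th a e m xi nu : PowerSeries ℝ)
    (v1 v3 v5 v7 v9 v11 : PowerSeries ℝ)
    (hv1 : v1 = lam)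
    (hv3 : v3 = xi)
    (hv5 : v5 = nu * a)
    (hv7 : v7 = w * th * a)
    (hv9 : v9 = th * a ^ 2 * e)
    (hv11 : v11 = th * (4 * (m ^ 2 + th ^ 2) - a ^ 2) * a ^ 2)
    (hlam0 : coeff 0 lam = 0)
    (hxi0 : coeff 0 xi = 0)
    (hnu0 : coeff 0 nu = 0)
    (hw0 : coeff 0 w = 0)
    (he0 : coeff 0 e = 0)
    (hD : 4 * ((coeff 0 m) ^ 2 + (coeff 0 th) ^ 2) - (coeff 0 a) ^ 2 = 0)
    (ha0 : coeff 0 a ≠ 0)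
    (hth0 : coeff 0 th ≠ 0) :
    coeff 1 v1 = coeff 1 lam ∧
    coeff 1 v3 = coeff 1 xi ∧
    coeff 1 v5 = coeff 0 a * coeff 1 nu ∧
    coeff 1 v7 = coeff 0 a * coeff 0 th * coeff 1 w ∧
    coeff 1 v9 = (coeff 0 a) ^ 2 * coeff 0 th * coeff 1 e ∧
    coeff 1 v11 = 2 * (coeff 0 a) ^ 2 * coeff 0 th
      * (4 * coeff 0 m * coeff 1 m + 4 * coeff 0 th * coeff 1 th - coeff 0 a * coeff 1 a) :=
  cubic_generic_darboux_general lam w th a e m xi nu v1 v3 v5 v7 v9 v11 hv1 hv3 hv5 hv7 hv9 hv11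
    hnu0 hw0 he0 hD
end
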